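/- arXiv:math/0505463 — 4 statements merged into one kernel-verified Lean document; each statement's English description precedes it below -/
import Mathlib

section
/- Let 1 ≤ k ≤ n and let λ ∈ Γ_k with its entries arranged in decreasing order λ_1 ≥ λ_2 ≥ ⋯ ≥ λ_n. Then λ_k ≥ 0. -/
open Finset

/-- The `k`-th elementary symmetric polynomial of `x ∈ ℝⁿ`. -/
noncomputable def esymmR (n k : ℕ) (x : Fin n → ℝ) : ℝ :=
  ∑ s ∈ Finset.univ.powersetCard k, ∏ i ∈ s, x i

/-- The Gårding cone `Γ_k ⊆ ℝⁿ`. -/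
def GardingCone (n k : ℕ) : Set (Fin n → ℝ) :=
  {x | ∀ j : ℕ, 1 ≤ j → j ≤ k → 0 < esymmR n j x}

/-!
Suppose `λ_k ≤ 0`, so that `λ_k, …, λ_n` are all nonpositive. By
`σ_j(μ) = σ_j(μ, a) - a σ_{j-1}(μ)`, deleting a nonpositive entry `a` keeps `σ_1, …, σ_k`
positive, so `(λ_1, …, λ_k) ∈ Γ_k ⊆ ℝ^k`. But in `ℝ^k` the cone `Γ_k` is the open positive
orthant: if `a ≤ 0` is an entry of `μ ∈ Γ_k`, then `σ_k(μ) = a σ_{k-1}(μ') ≤ 0` for the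
remaining `μ' ∈ Γ_{k-1}`. Hence `λ_k > 0`.
-/

namespace Multiset

variable {R : Type*}

section CommSemiring

variable [CommSemiring R]

theorem esymm_zero_right (s : Multiset R) : s.esymm 0 = 1 := by
  simp [esymm, powersetCard_zero_left]

theorem esymm_eq_zero_of_card_lt {s : Multiset R} {j : ℕ} (h : card s < j) : s.esymm j = 0 := by
  simp [esymm, powersetCard_eq_empty j h]

theorem esymm_cons_succ (a : R) (s : Multiset R) (j : ℕ) :
    (a ::ₘ s).esymm (j + 1) = s.esymm (j + 1) + a * s.esymm j := by
  simp only [esymm, powersetCard_cons, map_add, sum_add, map_map, Function.comp_def, prod_cons,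
    sum_map_mul_left]

end CommSemiring

variable [CommRing R] [LinearOrder R] [IsStrictOrderedRing R]

theorem esymm_pos_of_cons_of_nonpos {a : R} {s : Multiset R} {k : ℕ} (ha : a ≤ 0)
    (h : ∀ j ≤ k, 0 < (a ::ₘ s).esymm j) : ∀ j ≤ k, 0 < s.esymm j := by
  intro j hj
  induction j with
  | zero => simp [esymm_zero_right]
  | succ j ih =>
    have hprev : 0 < s.esymm j := ih (by omega)
    have hcons := esymm_cons_succ a s j
    nlinarith [h (j + 1) hj, mul_nonpos_of_nonpos_of_nonneg ha hprev.le]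

theorem esymm_pos_of_add_of_nonpos {s t : Multiset R} {k : ℕ} (ht : ∀ b ∈ t, b ≤ 0)
    (h : ∀ j ≤ k, 0 < (s + t).esymm j) : ∀ j ≤ k, 0 < s.esymm j := by
  induction t using Multiset.induction_on with
  | empty => simpa using h
  | cons b t ih =>
    rw [add_cons] at h
    exact ih (fun c hc => ht c (mem_cons_of_mem hc))
      (esymm_pos_of_cons_of_nonpos (ht b (mem_cons_self b t)) h)

theorem pos_of_mem_of_esymm_pos {s : Multiset R} (h : ∀ j ≤ card s, 0 < s.esymm j) :
    ∀ a ∈ s, 0 < a := by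
  intro a ha
  obtain ⟨t, rfl⟩ := exists_cons_of_mem ha
  by_contra! ha
  have ht : 0 < t.esymm (card t) :=
    esymm_pos_of_cons_of_nonpos ha h (card t) (by simp)
  have htop : (a ::ₘ t).esymm (card t + 1) = a * t.esymm (card t) := by
    rw [esymm_cons_succ, esymm_eq_zero_of_card_lt (Nat.lt_succ_self _), zero_add]
  have := h (card t + 1) (by simp)
  nlinarith [mul_nonpos_of_nonpos_of_nonneg ha ht.le]

end Multiset

theorem esymm_pos_of_mem_gardingCone {n k : ℕ} {x : Fin n → ℝ} (hx : x ∈ GardingCone n k) :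
    ∀ j ≤ k, 0 < (univ.val.map x).esymm j := by
  intro j hj
  rcases Nat.eq_zero_or_pos j with rfl | hj0
  · simp [Multiset.esymm_zero_right]
  · rw [Finset.esymm_map_val]
    exact hx j hj0 hj

theorem gardingCone_entry_pos_of_lt {n k : ℕ} (hkn : k ≤ n) {x : Fin n → ℝ}
    (hx : x ∈ GardingCone n k) (hdec : ∀ i j : Fin n, i ≤ j → x j ≤ x i) (i : Fin n)
    (hi : (i : ℕ) < k) : 0 < x i := by
  set p : Fin n → Prop := fun l => (l : ℕ) < k
  set head : Multiset ℝ := (univ.val.filter p).map x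
  set tail : Multiset ℝ := (univ.val.filter (fun l => ¬ p l)).map x
  by_contra! hxi
  have htail : ∀ b ∈ tail, b ≤ 0 := by
    simp only [tail, Multiset.mem_map, Multiset.mem_filter]
    rintro _ ⟨l, ⟨-, hl⟩, rfl⟩
    exact (hdec i l (by simp only [p] at hl; omega)).trans hxi
  have hsplit : head + tail = univ.val.map x := by
    rw [← Multiset.map_add, Multiset.filter_add_not]
  have hcard : Multiset.card head = k := by
    simp [head, p, ← Finset.filter_val, Fin.card_filter_val_lt, hkn]
  have hhead : ∀ j ≤ Multiset.card head, 0 < head.esymm j := by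
    rw [hcard]
    exact Multiset.esymm_pos_of_add_of_nonpos htail (hsplit ▸ esymm_pos_of_mem_gardingCone hx)
  exact hxi.not_gt <| Multiset.pos_of_mem_of_esymm_pos hhead (x i)
    (Multiset.mem_map_of_mem x (Multiset.mem_filter.2 ⟨mem_univ i, hi⟩))

/-- If `λ ∈ Γ_k` has decreasingly arranged entries `λ_1 ≥ ⋯ ≥ λ_n`, then `λ_k ≥ 0`. -/
theorem gardingCone_kth_entry_nonneg (n k : ℕ) (hk : 1 ≤ k) (hkn : k ≤ n)
    (x : Fin n → ℝ) (hx : x ∈ GardingCone n k)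
    (hdec : ∀ i j : Fin n, i ≤ j → x j ≤ x i) :
    0 ≤ x ⟨k - 1, by omega⟩ :=
  (gardingCone_entry_pos_of_lt hkn hx hdec _ (by simp only; omega)).le
end

section
/- Let 1 ≤ k ≤ n and let λ ∈ Γ_k with its entries arranged in decreasing order λ_1 ≥ λ_2 ≥ ⋯ ≥ λ_n. Then 0 < σ_{k−1;1}(λ) ≤ σ_{k−1;2}(λ) ≤ ⋯ ≤ σ_{k−1;n}(λ); in particular σ_{k−1;i}(λ) > 0 for every i. -/
/-!
On `Γ_k` the function `σ_{k-1}(·|i)` cannot vanish: if `σ_{k-1}(λ|i) = 0`, then `μ = λ|i` has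
`σ_k(μ) = σ_k(λ) > 0` and, by induction on `k`, `σ_{k-2}(μ) > 0`, against the degenerate Newton
inequality `σ_{k-1}(μ) = 0 ⇒ σ_{k-2}(μ) σ_k(μ) ≤ 0`. Differentiating `∏ (X + μ_i)` `n - k` times
keeps all roots real (Rolle) and reduces that inequality to `k` real numbers `z`, where it reads
`e_{k-1}(z)² - 2 e_{k-2}(z) e_k(z) = ∑_i (∏_{j ≠ i} z_j)²`. As `Γ_k` contains the segment from `λ`
to `(1, …, 1)`, where `σ_{k-1}(·|i) > 0`, the intermediate value theorem gives `σ_{k-1}(λ|i) > 0`.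
Monotonicity then comes from `σ_{k-1}(λ|i) - σ_{k-1}(λ|j) = (λ_j - λ_i) σ_{k-2}(λ|ij)`, applied to
`λ|i ∈ Γ_{k-1}`.
-/

open Finset

namespace Finset

variable {ι M S R : Type*} [DecidableEq ι] [AddCommMonoid M] [CommSemiring S] [CommRing R]

theorem sum_powersetCard_succ_insert {a : ι} {s : Finset ι} (ha : a ∉ s) (m : ℕ)
    (f : Finset ι → M) :
    ∑ t ∈ (insert a s).powersetCard (m + 1), f t
      = ∑ t ∈ s.powersetCard (m + 1), f t + ∑ t ∈ s.powersetCard m, f (insert a t) := by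
  have hnot : ∀ t ∈ s.powersetCard m, a ∉ t := fun t ht hat =>
    ha ((mem_powersetCard.mp ht).1 hat)
  rw [powersetCard_succ_insert ha, sum_union, sum_image]
  · intro t ht u hu htu
    rw [← erase_insert (hnot t ht), htu, erase_insert (hnot u hu)]
  · refine disjoint_left.mpr fun t ht ht' => ?_
    obtain ⟨u, -, rfl⟩ := mem_image.mp ht'
    exact ha ((mem_powersetCard.mp ht).1 (mem_insert_self a u))

theorem two_mul_sum_powersetCard_two (u : Finset ι) (w : ι → R) :
    2 * ∑ t ∈ u.powersetCard 2, ∏ i ∈ t, w i = (∑ i ∈ u, w i) ^ 2 - ∑ i ∈ u, w i ^ 2 := by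
  induction u using Finset.induction_on with
  | empty => rw [powersetCard_eq_empty.mpr (by simp)]; simp
  | insert a u ha ih =>
    have hpairs : ∑ t ∈ u.powersetCard 1, ∏ i ∈ insert a t, w i = w a * ∑ i ∈ u, w i := by
      rw [powersetCard_one, sum_map, mul_sum]
      refine sum_congr rfl fun b hb => ?_
      rw [Function.Embedding.coeFn_mk,
        prod_insert (notMem_singleton.mpr (ne_of_mem_of_not_mem hb ha).symm), prod_singleton]
    rw [sum_powersetCard_succ_insert ha, hpairs, sum_insert ha, sum_insert ha, mul_add, ih]
    ring

theorem sum_powersetCard_compl [Fintype ι] {m : ℕ} (hm : m ≤ Fintype.card ι)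
    (f : Finset ι → M) :
    ∑ t ∈ (univ : Finset ι).powersetCard m, f t
      = ∑ t ∈ (univ : Finset ι).powersetCard (Fintype.card ι - m), f tᶜ := by
  refine sum_nbij' compl compl (fun t ht => ?_) (fun t ht => ?_) (fun t _ => compl_compl t)
    (fun t _ => compl_compl t) (fun t _ => by rw [compl_compl])
  all_goals
    obtain ⟨-, hcard⟩ := mem_powersetCard.mp ht
    exact mem_powersetCard.mpr ⟨subset_univ _, by rw [card_compl]; omega⟩

variable [Fintype ι]

theorem sum_powersetCard_card_sub_one [Nonempty ι] (z : ι → S) :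
    ∑ t ∈ (univ : Finset ι).powersetCard (Fintype.card ι - 1), ∏ i ∈ t, z i
      = ∑ i, ∏ j ∈ {i}ᶜ, z j := by
  rw [sum_powersetCard_compl (Nat.sub_le _ _),
    Nat.sub_sub_self Fintype.card_pos, powersetCard_one, sum_map]
  rfl

theorem sum_powersetCard_card_sub_two_mul_prod (hN : 2 ≤ Fintype.card ι) (z : ι → S) :
    (∑ t ∈ (univ : Finset ι).powersetCard (Fintype.card ι - 2), ∏ i ∈ t, z i) * ∏ i, z i
      = ∑ t ∈ (univ : Finset ι).powersetCard 2, ∏ i ∈ t, ∏ j ∈ {i}ᶜ, z j := by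
  rw [sum_powersetCard_compl (Nat.sub_le _ _), Nat.sub_sub_self hN, sum_mul]
  refine sum_congr rfl fun t ht => ?_
  obtain ⟨a, b, hab, rfl⟩ := card_eq_two.mp (mem_powersetCard.mp ht).2
  have hprod : ∏ i, z i = (∏ i ∈ {a, b}ᶜ, z i) * (z a * z b) := by
    rw [← prod_compl_mul_prod {a, b}, prod_pair hab]
  have hcompl : ∀ c d : ι, c ≠ d → {c}ᶜ = insert d ({c, d}ᶜ : Finset ι) := by
    intro c d _
    ext x
    simp only [mem_compl, mem_singleton, mem_insert]
    grind
  rw [prod_pair hab, hprod, hcompl a b hab, hcompl b a hab.symm, pair_comm b a,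
    prod_insert (by simp), prod_insert (by simp)]
  ring

theorem sq_sum_powersetCard_card_sub_one_sub (hN : 2 ≤ Fintype.card ι) (z : ι → R) :
    (∑ t ∈ (univ : Finset ι).powersetCard (Fintype.card ι - 1), ∏ i ∈ t, z i) ^ 2
      - 2 * (∑ t ∈ (univ : Finset ι).powersetCard (Fintype.card ι - 2), ∏ i ∈ t, z i)
        * ∏ i, z i
      = ∑ i, (∏ j ∈ {i}ᶜ, z j) ^ 2 := by
  have : Nonempty ι := Fintype.card_pos_iff.mp (by omega)
  rw [mul_assoc, sum_powersetCard_card_sub_two_mul_prod hN, two_mul_sum_powersetCard_two,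
    sum_powersetCard_card_sub_one]
  ring

end Finset

theorem Multiset.esymm_mul_esymm_nonpos {s : Multiset ℝ} (hs : 2 ≤ card s)
    (h : s.esymm (card s - 1) = 0) : s.esymm (card s - 2) * s.esymm (card s) ≤ 0 := by
  obtain ⟨l, rfl⟩ : ∃ l : List ℝ, (l : Multiset ℝ) = s := ⟨s.toList, s.coe_toList⟩
  have hesymm : ∀ m, (l : Multiset ℝ).esymm m
      = ∑ t ∈ (univ : Finset (Fin l.length)).powersetCard m, ∏ i ∈ t, l.get i := by
    intro m
    rw [← Finset.esymm_map_val, Fin.univ_val_map, List.ofFn_get]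
  have htop : (l : Multiset ℝ).esymm l.length = ∏ i, l.get i := by
    have huniv : (univ : Finset (Fin l.length)).powersetCard l.length = {univ} := by
      simpa using Finset.powersetCard_self (univ : Finset (Fin l.length))
    rw [hesymm, huniv, Finset.sum_singleton]
  rw [Multiset.coe_card] at hs h ⊢
  have key := sq_sum_powersetCard_card_sub_one_sub (by rwa [Fintype.card_fin]) l.get
  rw [Fintype.card_fin, ← hesymm, ← hesymm, h, ← htop] at key
  have hsq : 0 ≤ ∑ i, (∏ j ∈ {i}ᶜ, l.get j) ^ 2 := Finset.sum_nonneg fun i _ => sq_nonneg _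
  linarith

namespace Polynomial

theorem card_roots_derivative_eq_natDegree {p : ℝ[X]}
    (hp : Multiset.card p.roots = p.natDegree) :
    Multiset.card (derivative p).roots = (derivative p).natDegree := by
  have hrolle := card_roots_le_derivative p
  have hdeg := natDegree_derivative_le p
  exact le_antisymm (card_roots' _) (by omega)

theorem card_roots_iterate_derivative_eq_natDegree {p : ℝ[X]}
    (hp : Multiset.card p.roots = p.natDegree) (m : ℕ) :
    Multiset.card (derivative^[m] p).roots = (derivative^[m] p).natDegree := by
  induction m with
  | zero => exact hp
  | succ m ih =>
    rw [Function.iterate_succ_apply']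
    exact card_roots_derivative_eq_natDegree ih

/-- The degenerate case of Newton's inequality `a₁² ≥ c · a₀ a₂` for the coefficients of a
real-rooted polynomial. -/
theorem coeff_zero_mul_coeff_two_nonpos {q : ℝ[X]}
    (hq : Multiset.card q.roots = q.natDegree) (h1 : q.coeff 1 = 0) :
    q.coeff 0 * q.coeff 2 ≤ 0 := by
  obtain hd | ⟨m, hm⟩ : q.natDegree < 2 ∨ ∃ m, q.natDegree = m + 2 :=
    (lt_or_ge _ _).imp_right fun h => ⟨q.natDegree - 2, by omega⟩
  · rw [coeff_eq_zero_of_natDegree_lt hd, mul_zero]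
  have hvieta (j : ℕ) (hj : j ≤ m + 2) :=
    coeff_eq_esymm_roots_of_card hq (k := j) (by omega)
  have hlc : q.leadingCoeff ≠ 0 :=
    leadingCoeff_ne_zero.mpr (ne_zero_of_natDegree_gt (n := 0) (by omega))
  have he : q.roots.esymm (Multiset.card q.roots - 1) = 0 := by
    have := hvieta 1 (by omega)
    rw [h1, hm] at this
    rw [hq, hm]
    simpa [hlc] using this.symm
  have hM := Multiset.esymm_mul_esymm_nonpos (by omega) he
  rw [hq, hm, Nat.add_sub_cancel] at hM
  have hsign : ((-1 : ℝ) ^ m) ^ 2 = 1 := by rw [← pow_mul, pow_mul', neg_one_sq, one_pow]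
  rw [hvieta 0 (by omega), hvieta 2 (by omega), hm, Nat.sub_zero, Nat.add_sub_cancel]
  calc q.leadingCoeff * (-1) ^ (m + 2) * q.roots.esymm (m + 2)
        * (q.leadingCoeff * (-1) ^ m * q.roots.esymm m)
      = q.leadingCoeff ^ 2 * ((-1) ^ m) ^ 2 * (q.roots.esymm m * q.roots.esymm (m + 2)) := by
        ring
    _ ≤ 0 := by
      rw [hsign, mul_one]
      exact mul_nonpos_of_nonneg_of_nonpos (sq_nonneg _) hM

theorem card_roots_prod_X_add_C {R ι : Type*} [CommRing R] [IsDomain R] (s : Finset ι)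
    (y : ι → R) :
    Multiset.card (∏ i ∈ s, (X + C (y i))).roots = (∏ i ∈ s, (X + C (y i))).natDegree := by
  rw [natDegree_prod_of_monic _ _ fun i _ => monic_X_add_C (y i),
    roots_prod _ _ (monic_prod_of_monic _ _ fun i _ => monic_X_add_C (y i)).ne_zero]
  simp

end Polynomial

open Polynomial

@[simp]
theorem esymmR_zero (n : ℕ) (x : Fin n → ℝ) : esymmR n 0 x = 1 := by
  simp [esymmR]

theorem continuous_esymmR (n m : ℕ) : Continuous (esymmR n m) :=
  continuous_finsetSum _ fun _ _ => continuous_finsetProd _ fun i _ => continuous_apply i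

theorem esymmR_update_zero (n m : ℕ) (x : Fin n → ℝ) (i : Fin n) :
    esymmR n m (Function.update x i 0) = ∑ s ∈ (univ.erase i).powersetCard m, ∏ j ∈ s, x j := by
  refine (sum_subset_zero_on_sdiff (powersetCard_mono (erase_subset i univ)) ?_ ?_).symm
  · intro s hs
    obtain ⟨hmem, hnot⟩ := mem_sdiff.mp hs
    have hi : i ∈ s := by
      by_contra hi
      exact hnot (mem_powersetCard.mpr ⟨subset_erase.mpr ⟨subset_univ s, hi⟩,
        (mem_powersetCard.mp hmem).2⟩)
    exact prod_eq_zero hi (Function.update_self i 0 x)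
  · intro s hs
    exact (prod_update_of_notMem (fun hi => notMem_erase i univ
      ((mem_powersetCard.mp hs).1 hi)) _ _).symm

theorem esymmR_succ (n m : ℕ) (x : Fin n → ℝ) (i : Fin n) :
    esymmR n (m + 1) x
      = esymmR n (m + 1) (Function.update x i 0) + x i * esymmR n m (Function.update x i 0) := by
  conv_lhs => rw [esymmR, ← insert_erase (mem_univ i)]
  rw [sum_powersetCard_succ_insert (notMem_erase i univ), esymmR_update_zero,
    esymmR_update_zero, mul_sum]
  congr 1
  refine sum_congr rfl fun t ht => prod_insert fun hi => ?_
  exact notMem_erase i univ ((mem_powersetCard.mp ht).1 hi)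

theorem esymmR_update_zero_sub (n m : ℕ) (x : Fin n → ℝ) (i j : Fin n) :
    esymmR n (m + 1) (Function.update x i 0) - esymmR n (m + 1) (Function.update x j 0)
      = (x j - x i) * esymmR n m (Function.update (Function.update x i 0) j 0) := by
  rcases eq_or_ne i j with rfl | hij
  · simp
  rw [esymmR_succ n m (Function.update x i 0) j, esymmR_succ n m (Function.update x j 0) i,
    Function.update_of_ne hij.symm, Function.update_of_ne hij, Function.update_comm hij.symm]
  ring

theorem esymmR_const_mul (n m : ℕ) (a : ℝ) (x : Fin n → ℝ) :
    esymmR n m (fun i => a * x i) = a ^ m * esymmR n m x := by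
  rw [esymmR, esymmR, mul_sum]
  refine sum_congr rfl fun s hs => ?_
  rw [prod_mul_distrib, prod_const, (mem_powersetCard.mp hs).2]

theorem coeff_prod_X_add_C_eq_esymmR {n j : ℕ} (hj : j ≤ n) (y : Fin n → ℝ) :
    (∏ i, (X + C (y i))).coeff (n - j) = esymmR n j y := by
  rw [prod_X_add_C_coeff _ _ (by simp), card_univ, Fintype.card_fin, Nat.sub_sub_self hj]
  rfl

theorem esymmR_mul_esymmR_nonpos {n k : ℕ} (hkn : k + 2 ≤ n) (y : Fin n → ℝ)
    (h : esymmR n (k + 1) y = 0) : esymmR n k y * esymmR n (k + 2) y ≤ 0 := by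
  set d := n - (k + 2)
  set q := derivative^[d] (∏ i, (X + C (y i)))
  have hcoeff (l : ℕ) (hl : l ≤ 2) :
      q.coeff l = ((l + d).descFactorial d : ℝ) * esymmR n (k + 2 - l) y := by
    rw [coeff_iterate_derivative, nsmul_eq_mul, ← coeff_prod_X_add_C_eq_esymmR (by omega),
      show n - (k + 2 - l) = l + d by omega]
  have hq := coeff_zero_mul_coeff_two_nonpos
    (card_roots_iterate_derivative_eq_natDegree (card_roots_prod_X_add_C univ y) d)
    (by rw [hcoeff 1 (by omega), show k + 2 - 1 = k + 1 by omega, h, mul_zero])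
  rw [hcoeff 0 (by omega), hcoeff 2 (by omega)] at hq
  have hc0 : (0 : ℝ) < (0 + d).descFactorial d := mod_cast Nat.descFactorial_pos.mpr (by omega)
  have hc2 : (0 : ℝ) < (2 + d).descFactorial d := mod_cast Nat.descFactorial_pos.mpr (by omega)
  simp only [Nat.sub_zero, Nat.add_sub_cancel] at hq
  nlinarith [mul_pos hc0 hc2]

theorem esymmR_add_const {n j : ℕ} (hj : j ≤ n) (x : Fin n → ℝ) (c : ℝ) :
    esymmR n j (fun i => x i + c)
      = ∑ m ∈ range (j + 1), ((n - m).choose (j - m) : ℝ) * c ^ (j - m) * esymmR n m x := by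
  calc esymmR n j (fun i => x i + c)
      = ∑ s ∈ univ.powersetCard j, ∑ t ∈ s.powerset, (∏ i ∈ t, x i) * c ^ (j - #t) := by
        refine sum_congr rfl fun s hs => ?_
        rw [prod_add]
        refine sum_congr rfl fun t ht => ?_
        rw [prod_const, card_sdiff_of_subset (mem_powerset.mp ht), (mem_powersetCard.mp hs).2]
    _ = ∑ t ∈ univ.powerset, ∑ s ∈ univ.powersetCard j with t ⊆ s,
          (∏ i ∈ t, x i) * c ^ (j - #t) :=
        sum_comm' fun s t => by simp [mem_powersetCard, and_comm]
    _ = ∑ m ∈ range (n + 1), ∑ t ∈ univ.powersetCard m,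
          (#{s ∈ univ.powersetCard j | t ⊆ s} : ℝ) * ((∏ i ∈ t, x i) * c ^ (j - #t)) := by
        simp only [sum_const, nsmul_eq_mul]
        rw [sum_powerset, card_univ, Fintype.card_fin]
    _ = ∑ m ∈ range (j + 1), ∑ t ∈ univ.powersetCard m,
          (#{s ∈ univ.powersetCard j | t ⊆ s} : ℝ) * ((∏ i ∈ t, x i) * c ^ (j - #t)) := by
        refine (sum_subset (range_subset_range.mpr (by omega)) fun m _ hm => ?_).symm
        refine sum_eq_zero fun t ht => ?_
        rw [filter_false_of_mem fun s hs hts => ?_, card_empty, Nat.cast_zero, zero_mul]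
        have := card_le_card hts
        rw [(mem_powersetCard.mp hs).2, (mem_powersetCard.mp ht).2] at this
        exact hm (mem_range.mpr (by omega))
    _ = _ := by
        refine sum_congr rfl fun m hm => ?_
        rw [esymmR, mul_sum]
        refine sum_congr rfl fun t ht => ?_
        have hcard := (mem_powersetCard.mp ht).2
        rw [card_filter_powersetCard_subset t univ j (subset_univ t)
          (by rw [hcard]; exact mem_range_succ_iff.mp hm), card_univ,
          Fintype.card_fin, hcard]
        ring

theorem gardingCone_antitone (n : ℕ) : Antitone (GardingCone n) :=
  fun _ _ hjk _ hx j hj1 hj2 => hx j hj1 (hj2.trans hjk)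

theorem esymmR_pos_of_mem_gardingCone {n k m : ℕ} {x : Fin n → ℝ} (hx : x ∈ GardingCone n k)
    (hm : m ≤ k) : 0 < esymmR n m x := by
  rcases Nat.eq_zero_or_pos m with rfl | hm0
  · simp
  · exact hx m hm0 hm

theorem segment_mem_gardingCone {n k : ℕ} (hkn : k ≤ n) {x : Fin n → ℝ}
    (hx : x ∈ GardingCone n k) {t : ℝ} (ht0 : 0 ≤ t) (ht1 : t ≤ 1) :
    (fun i => (1 - t) * x i + t) ∈ GardingCone n k := by
  intro j hj hjk
  rw [esymmR_add_const (hjk.trans hkn) (fun i => (1 - t) * x i) t]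
  simp only [esymmR_const_mul]
  have hterm (m : ℕ) (hm : m ∈ range (j + 1)) :
      0 ≤ ((n - m).choose (j - m) : ℝ) * t ^ (j - m) * ((1 - t) ^ m * esymmR n m x) := by
    have := esymmR_pos_of_mem_gardingCone hx ((mem_range_succ_iff.mp hm).trans hjk)
    have : 0 ≤ 1 - t := by linarith
    positivity
  refine sum_pos' hterm ?_
  rcases ht1.lt_or_eq with ht1 | rfl
  · refine ⟨j, self_mem_range_succ j, ?_⟩
    have := hx j hj hjk
    have : 0 < 1 - t := by linarith
    simp only [Nat.sub_self, Nat.choose_zero_right, pow_zero, Nat.cast_one, one_mul]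
    positivity
  · refine ⟨0, mem_range.mpr (Nat.succ_pos j), ?_⟩
    have : 0 < n.choose j := Nat.choose_pos (hjk.trans hkn)
    simp only [Nat.sub_zero, one_pow, mul_one, pow_zero, esymmR_zero]
    positivity

theorem esymmR_update_zero_ne_zero {n k : ℕ} (hkn : k + 2 ≤ n) {y : Fin n → ℝ}
    (hy : y ∈ GardingCone n (k + 2)) (i : Fin n)
    (hpos : 0 < esymmR n k (Function.update y i 0)) :
    esymmR n (k + 1) (Function.update y i 0) ≠ 0 := by
  intro h0
  have hsucc := esymmR_succ n (k + 1) y i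
  rw [h0, mul_zero, add_zero] at hsucc
  have htop : 0 < esymmR n (k + 2) (Function.update y i 0) := hsucc ▸ hy (k + 2) (by omega) le_rfl
  exact (mul_pos hpos htop).not_ge (esymmR_mul_esymmR_nonpos hkn _ h0)

theorem esymmR_update_zero_pos {n k : ℕ} (hkn : k + 1 ≤ n) {x : Fin n → ℝ}
    (hx : x ∈ GardingCone n (k + 1)) (i : Fin n) :
    0 < esymmR n k (Function.update x i 0) := by
  induction k generalizing x with
  | zero => simp
  | succ k ih =>
    set φ : ℝ → ℝ := fun t =>
      esymmR n (k + 1) (Function.update (fun j => (1 - t) * x j + t) i 0)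
    have hφ : Continuous φ := (continuous_esymmR n (k + 1)).comp
      ((continuous_pi fun j => by fun_prop).update i continuous_const)
    have hφ_ne (t : ℝ) (ht : t ∈ Set.Icc 0 1) : φ t ≠ 0 := by
      have hy := segment_mem_gardingCone (by omega) hx ht.1 ht.2
      exact esymmR_update_zero_ne_zero hkn hy i
        (ih (by omega) (gardingCone_antitone n (by omega) hy))
    have hφ1 : 0 < φ 1 := by
      simp only [φ, sub_self, zero_mul, zero_add, esymmR_update_zero, prod_const_one, sum_const,
        card_powersetCard, card_erase_of_mem (mem_univ i), card_univ, Fintype.card_fin,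
        nsmul_eq_mul, mul_one, Nat.cast_pos]
      exact Nat.choose_pos (by omega)
    by_contra! hx0
    have hφ0 : φ 0 ≤ 0 := by simpa [φ] using hx0
    obtain ⟨t, ht, hφt⟩ := isPreconnected_Icc.intermediate_value
      (Set.left_mem_Icc.mpr zero_le_one) (Set.right_mem_Icc.mpr zero_le_one) hφ.continuousOn
      ⟨hφ0, hφ1.le⟩
    exact hφ_ne t ht hφt

theorem update_zero_mem_gardingCone {n k : ℕ} (hkn : k + 1 ≤ n) {x : Fin n → ℝ}
    (hx : x ∈ GardingCone n (k + 1)) (i : Fin n) : Function.update x i 0 ∈ GardingCone n k :=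
  fun j _ hjk => esymmR_update_zero_pos (by omega) (gardingCone_antitone n (by omega) hx) i

/-- If `λ ∈ Γ_k` is arranged decreasingly, then
`0 < σ_{k-1;1}(λ) ≤ σ_{k-1;2}(λ) ≤ ⋯ ≤ σ_{k-1;n}(λ)`; in particular all
`σ_{k-1;i}(λ)` are positive.  Here `σ_{k;i}` denotes `σ_k` with the `i`-th entry
replaced by `0`. -/
theorem esymm_update_pos_monotone (n k : ℕ) (hk : 1 ≤ k) (hkn : k ≤ n)
    (x : Fin n → ℝ) (hx : x ∈ GardingCone n k)
    (hdec : ∀ i j : Fin n, i ≤ j → x j ≤ x i) :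
    (∀ i : Fin n, 0 < esymmR n (k - 1) (Function.update x i 0)) ∧
      ∀ i j : Fin n, i ≤ j →
        esymmR n (k - 1) (Function.update x i 0)
          ≤ esymmR n (k - 1) (Function.update x j 0) := by
  obtain ⟨k, rfl⟩ : ∃ m, k = m + 1 := ⟨k - 1, by omega⟩
  rw [Nat.add_sub_cancel]
  refine ⟨esymmR_update_zero_pos hkn hx, fun i j hij => ?_⟩
  cases k with
  | zero => simp
  | succ k =>
    have hdiff := esymmR_update_zero_sub n k x i j
    have hpos := esymmR_update_zero_pos (by omega) (update_zero_mem_gardingCone hkn hx i) j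
    have := mul_nonpos_of_nonpos_of_nonneg (sub_nonpos.mpr (hdec i j hij)) hpos.le
    linarith
end

section
/- Let n ≥ 3 and for ε > 0 let v_ε(x) = (ε/(ε² + |x|²))^{(n−2)/2} on ℝ^n. Then the integral ∫_{ℝ^n} v_ε(x)^{2n/(n−2)} dx is finite and independent of ε (it equals ∫_{ℝ^n} v_1(x)^{2n/(n−2)} dx for every ε > 0), and for every 1 ≤ k ≤ n, ∫_{ℝ^n} v_ε(x)^{(2n−4k)/(n−2)} σ_k(λ(V[v_ε](x)/v_ε(x))) dx = C_{n,k} ∫_{ℝ^n} v_ε(x)^{2n/(n−2)} dx, where C_{n,k} = binom(n,k)(n−2)^k. -/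
open Finset

/-- The `i`-th partial derivative `∂_i u (x)`. -/
noncomputable def egrad (n : ℕ) (u : (Fin n → ℝ) → ℝ) (x : Fin n → ℝ) (i : Fin n) : ℝ :=
  fderiv ℝ u x (Pi.single i 1)

/-- The squared Euclidean length `|∇u(x)|²` of the gradient. -/
noncomputable def gradSq (n : ℕ) (u : (Fin n → ℝ) → ℝ) (x : Fin n → ℝ) : ℝ :=
  ∑ i : Fin n, (egrad n u x i) ^ 2

/-- The Hessian entry `∂_i∂_j u(x)`. -/
noncomputable def ehess (n : ℕ) (u : (Fin n → ℝ) → ℝ) (x : Fin n → ℝ) (i j : Fin n) : ℝ :=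
  fderiv ℝ (fun y => fderiv ℝ u y (Pi.single j 1)) x (Pi.single i 1)

/-- The matrix `V[v](x) = -∇²v + (n/(n-2)) (∇v ⊗ ∇v)/v - (1/(n-2)) (|∇v|²/v) I`. -/
noncomputable def Vmat (n : ℕ) (v : (Fin n → ℝ) → ℝ) (x : Fin n → ℝ) :
    Matrix (Fin n) (Fin n) ℝ :=
  Matrix.of fun i j =>
    -ehess n v x i j + ((n : ℝ) / ((n : ℝ) - 2)) * (egrad n v x i * egrad n v x j) / v x
      - (1 / ((n : ℝ) - 2)) * (gradSq n v x / v x) * (if i = j then 1 else 0)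

/-- The standard bubble `v_ε(x) = (ε/(ε² + |x|²))^{(n-2)/2}`. -/
noncomputable def bubble (n : ℕ) (ε : ℝ) (x : Fin n → ℝ) : ℝ :=
  (ε / (ε ^ 2 + ∑ i : Fin n, (x i) ^ 2)) ^ (((n : ℝ) - 2) / 2)

/-- `σ_k(λ(M))` for a symmetric matrix `M`, expressed as the sum of all `k × k`
principal minors of `M`. -/
noncomputable def sigmaMinors (n k : ℕ) (M : Matrix (Fin n) (Fin n) ℝ) : ℝ :=
  ∑ s ∈ Finset.univ.powersetCard k,
    (M.submatrix (Subtype.val : {i // i ∈ s} → Fin n) Subtype.val).det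

/-!
With `S = ε² + |x|²`, the bubble is a constant multiple of `S ^ (-(n-2)/2)`. For exactly this
exponent the `x ⊗ x` terms of `-∇²v` and `(n/(n-2)) ∇v ⊗ ∇v / v` cancel, leaving
`V[v_ε]/v_ε = (n-2) (ε/S)² I`. Hence `σ_k(V[v_ε]/v_ε) = binom(n,k) (n-2)^k (ε/S)^{2k}`, while
`v_ε^{(2n-4k)/(n-2)} = (ε/S)^{n-2k}`, so the integrand is pointwise `C_{n,k} v_ε^{2n/(n-2)}`.
Finiteness holds because `v_1^{2n/(n-2)} = (1+|x|²)^{-n}` and `2n > n`; independence of `ε` is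
the scaling law `v_ε(x) = ε^{-(n-2)/2} v_1(x/ε)`.
-/

open MeasureTheory

section RadialPower

variable {n : ℕ} {a : ℝ}

theorem sum_smul_proj_single (c : Fin n → ℝ) (j : Fin n) :
    (∑ i, c i • ContinuousLinearMap.proj (R := ℝ) (φ := fun _ : Fin n => ℝ) i) (Pi.single j 1)
      = c j := by
  simp [Pi.single_apply]

theorem hasFDerivAt_sum_sq (x : Fin n → ℝ) :
    HasFDerivAt (fun y : Fin n → ℝ => ∑ i, y i ^ 2)
      (∑ i, (2 * x i) • ContinuousLinearMap.proj (R := ℝ) (φ := fun _ : Fin n => ℝ) i) x :=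
  HasFDerivAt.fun_sum fun i _ => by
    simpa [two_mul, add_smul, pow_two] using
      (hasFDerivAt_apply (𝕜 := ℝ) i x).fun_mul (hasFDerivAt_apply i x)

theorem hasFDerivAt_add_sum_sq_rpow (ha : 0 < a) (p : ℝ) (x : Fin n → ℝ) :
    HasFDerivAt (fun y : Fin n → ℝ => (a + ∑ i, y i ^ 2) ^ p)
      ((p * (a + ∑ i, x i ^ 2) ^ (p - 1)) •
        ∑ i, (2 * x i) • ContinuousLinearMap.proj (R := ℝ) (φ := fun _ : Fin n => ℝ) i) x := by
  have hpos : 0 < a + ∑ i, x i ^ 2 := by positivity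
  exact ((hasFDerivAt_sum_sq x).const_add a).rpow_const (Or.inl hpos.ne')

theorem egrad_const_mul_add_sum_sq_rpow (ha : 0 < a) (A p : ℝ) (x : Fin n → ℝ) (j : Fin n) :
    egrad n (fun y => A * (a + ∑ i, y i ^ 2) ^ p) x j
      = 2 * p * A * x j * (a + ∑ i, x i ^ 2) ^ (p - 1) := by
  rw [egrad, ((hasFDerivAt_add_sum_sq_rpow ha p x).const_mul A).fderiv]
  simp only [FunLike.coe_smul, Pi.smul_apply, sum_smul_proj_single, smul_eq_mul]
  ring

theorem ehess_const_mul_add_sum_sq_rpow (ha : 0 < a) (A p : ℝ) (x : Fin n → ℝ) (i j : Fin n) :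
    ehess n (fun y => A * (a + ∑ i, y i ^ 2) ^ p) x i j
      = 2 * p * A * ((if i = j then 1 else 0) * (a + ∑ i, x i ^ 2) ^ (p - 1)
          + 2 * (p - 1) * x i * x j * (a + ∑ i, x i ^ 2) ^ (p - 2)) := by
  have hgrad : (fun y => fderiv ℝ (fun y => A * (a + ∑ i, y i ^ 2) ^ p) y (Pi.single j 1))
      = fun y : Fin n → ℝ => 2 * p * A * (y j * (a + ∑ i, y i ^ 2) ^ (p - 1)) := by
    funext y
    rw [← egrad, egrad_const_mul_add_sum_sq_rpow ha]
    ring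
  rw [ehess, hgrad, (((hasFDerivAt_apply j x).fun_mul
    (hasFDerivAt_add_sum_sq_rpow ha (p - 1) x)).const_mul (2 * p * A)).fderiv]
  simp only [FunLike.coe_smul, Pi.smul_apply, add_apply, sum_smul_proj_single,
    ContinuousLinearMap.proj_apply, smul_eq_mul, Pi.single_apply, @eq_comm _ j i]
  rw [show p - 1 - 1 = p - 2 by ring]
  ring

theorem gradSq_const_mul_add_sum_sq_rpow (ha : 0 < a) (A p : ℝ) (x : Fin n → ℝ) :
    gradSq n (fun y => A * (a + ∑ i, y i ^ 2) ^ p) x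
      = (2 * p * A * (a + ∑ i, x i ^ 2) ^ (p - 1)) ^ 2 * ∑ i, x i ^ 2 := by
  simp only [gradSq, egrad_const_mul_add_sum_sq_rpow ha, mul_sum]
  exact sum_congr rfl fun i _ => by ring

theorem Vmat_div_const_mul_add_sum_sq_rpow (hn : (n : ℝ) ≠ 2) (ha : 0 < a) {A : ℝ} (hA : A ≠ 0)
    (x : Fin n → ℝ) :
    (Matrix.of fun i j => Vmat n (fun y => A * (a + ∑ i, y i ^ 2) ^ (-(((n : ℝ) - 2) / 2))) x i j
        / (A * (a + ∑ i, x i ^ 2) ^ (-(((n : ℝ) - 2) / 2))))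
      = (((n : ℝ) - 2) * a / (a + ∑ i, x i ^ 2) ^ 2) • (1 : Matrix (Fin n) (Fin n) ℝ) := by
  set S := a + ∑ i, x i ^ 2 with hS_def
  set p := -(((n : ℝ) - 2) / 2)
  have hS : 0 < S := by positivity
  have hp1 : S ^ (p - 1) = S ^ p / S := by rw [Real.rpow_sub hS, Real.rpow_one]
  have hp2 : S ^ (p - 2) = S ^ p / S ^ 2 := by rw [Real.rpow_sub hS, Real.rpow_two]
  have hQ : ∑ i, x i ^ 2 = S - a := by rw [hS_def]; ring
  have hn2 : (n : ℝ) - 2 ≠ 0 := sub_ne_zero.mpr hn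
  ext i j
  simp only [Matrix.of_apply, Vmat, Matrix.smul_apply, Matrix.one_apply, smul_eq_mul,
    ehess_const_mul_add_sum_sq_rpow ha, egrad_const_mul_add_sum_sq_rpow ha,
    gradSq_const_mul_add_sum_sq_rpow ha]
  rw [← hS_def, hp1, hp2, hQ]
  field_simp
  ring

end RadialPower

theorem sigmaMinors_smul_one (n k : ℕ) (μ : ℝ) :
    sigmaMinors n k (μ • (1 : Matrix (Fin n) (Fin n) ℝ)) = (n.choose k : ℝ) * μ ^ k := by
  have hminor : ∀ s ∈ (univ : Finset (Fin n)).powersetCard k,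
      ((μ • (1 : Matrix (Fin n) (Fin n) ℝ)).submatrix
        (Subtype.val : {i // i ∈ s} → Fin n) Subtype.val).det = μ ^ k := by
    intro s hs
    rw [Matrix.submatrix_smul, Pi.smul_apply, Pi.smul_apply,
      Matrix.submatrix_one _ Subtype.val_injective, Matrix.det_smul,
      Matrix.det_one, mul_one, Fintype.card_coe, (mem_powersetCard.mp hs).2]
  rw [sigmaMinors, sum_congr rfl hminor, sum_const, card_powersetCard, card_univ,
    Fintype.card_fin, nsmul_eq_mul]

theorem sq_norm_le_sum_sq {n : ℕ} (x : Fin n → ℝ) : ‖x‖ ^ 2 ≤ ∑ i, x i ^ 2 := by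
  have hQ : 0 ≤ ∑ i, x i ^ 2 := by positivity
  have hle : ‖x‖ ≤ √(∑ i, x i ^ 2) :=
    (pi_norm_le_iff_of_nonneg (Real.sqrt_nonneg _)).mpr fun i =>
      Real.abs_le_sqrt (single_le_sum (fun j _ => sq_nonneg (x j)) (mem_univ i))
  calc ‖x‖ ^ 2 ≤ √(∑ i, x i ^ 2) ^ 2 := pow_le_pow_left₀ (norm_nonneg x) hle 2
    _ = ∑ i, x i ^ 2 := Real.sq_sqrt hQ

theorem integrable_one_add_sum_sq_rpow_neg {n : ℕ} {r : ℝ} (hr : (n : ℝ) < 2 * r) :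
    Integrable (fun x : Fin n → ℝ => (1 + ∑ i, x i ^ 2) ^ (-r)) := by
  have hr0 : 0 ≤ r := by linarith [(n.cast_nonneg : (0 : ℝ) ≤ n)]
  have hdom : Integrable (fun x : Fin n → ℝ => (1 + ‖x‖ ^ 2) ^ (-(2 * r) / 2)) :=
    integrable_rpow_neg_one_add_norm_sq (by rwa [Module.finrank_fin_fun])
  refine hdom.mono' ?_ (Filter.Eventually.of_forall fun x => ?_)
  · exact (Continuous.rpow_const (by fun_prop) fun x => Or.inl (by positivity)).aestronglyMeasurable
  · rw [Real.norm_of_nonneg (by positivity), show -(2 * r) / 2 = -r by ring]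
    exact Real.rpow_le_rpow_of_nonpos (by positivity) (by linarith [sq_norm_le_sum_sq x])
      (neg_nonpos.mpr hr0)

section Bubble

variable {n : ℕ} {ε : ℝ}

theorem bubble_eq_const_mul_rpow (hε : 0 < ε) :
    bubble n ε = fun y => ε ^ (((n : ℝ) - 2) / 2) *
      (ε ^ 2 + ∑ i, y i ^ 2) ^ (-(((n : ℝ) - 2) / 2)) := by
  funext y
  rw [bubble, Real.div_rpow hε.le (by positivity), Real.rpow_neg (by positivity), div_eq_mul_inv]

theorem bubble_rpow (hn : (n : ℝ) ≠ 2) (hε : 0 < ε) (m : ℝ) (x : Fin n → ℝ) :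
    bubble n ε x ^ (2 * m / ((n : ℝ) - 2)) = (ε / (ε ^ 2 + ∑ i, x i ^ 2)) ^ m := by
  have hn2 : (n : ℝ) - 2 ≠ 0 := sub_ne_zero.mpr hn
  rw [bubble, ← Real.rpow_mul (by positivity)]
  congr 1
  field_simp

theorem bubble_eq_rpow_mul_bubble_one (hε : 0 < ε) (x : Fin n → ℝ) :
    bubble n ε x = ε ^ (-(((n : ℝ) - 2) / 2)) * bubble n 1 (ε⁻¹ • x) := by
  have hscale : 1 / (1 ^ 2 + ∑ i, (ε⁻¹ • x) i ^ 2) = ε * (ε / (ε ^ 2 + ∑ i, x i ^ 2)) := by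
    simp only [Pi.smul_apply, smul_eq_mul, mul_pow, ← mul_sum]
    field_simp
  rw [bubble, bubble, hscale, Real.mul_rpow hε.le (by positivity), ← mul_assoc,
    ← Real.rpow_add hε, neg_add_cancel, Real.rpow_zero, one_mul]

theorem bubble_rpow_critical_eq (hn : (n : ℝ) ≠ 2) (hε : 0 < ε) (x : Fin n → ℝ) :
    bubble n ε x ^ (2 * (n : ℝ) / ((n : ℝ) - 2))
      = (ε ^ n)⁻¹ * bubble n 1 (ε⁻¹ • x) ^ (2 * (n : ℝ) / ((n : ℝ) - 2)) := by
  have hn2 : (n : ℝ) - 2 ≠ 0 := sub_ne_zero.mpr hn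
  have hb : 0 ≤ bubble n 1 (ε⁻¹ • x) := Real.rpow_nonneg (by positivity) _
  rw [bubble_eq_rpow_mul_bubble_one hε, Real.mul_rpow (Real.rpow_nonneg hε.le _) hb,
    ← Real.rpow_mul hε.le]
  congr 1
  rw [show -(((n : ℝ) - 2) / 2) * (2 * n / (n - 2)) = -n by field_simp, Real.rpow_neg hε.le,
    Real.rpow_natCast]

theorem integrable_bubble_one_rpow_critical (hn : 3 ≤ n) :
    Integrable (fun x : Fin n → ℝ => bubble n 1 x ^ (2 * (n : ℝ) / ((n : ℝ) - 2))) := by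
  have hn' : (3 : ℝ) ≤ n := by exact_mod_cast hn
  have hbubble (x : Fin n → ℝ) : bubble n 1 x ^ (2 * (n : ℝ) / ((n : ℝ) - 2))
      = (1 + ∑ i, x i ^ 2) ^ (-(n : ℝ)) := by
    rw [bubble_rpow (by linarith) one_pos, one_pow, one_div, Real.inv_rpow (by positivity),
      Real.rpow_neg (by positivity)]
  simp only [hbubble]
  exact integrable_one_add_sum_sq_rpow_neg (by linarith)

theorem bubble_rpow_mul_sigmaMinors (hn : (n : ℝ) ≠ 2) (hε : 0 < ε) (k : ℕ) (x : Fin n → ℝ) :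
    bubble n ε x ^ ((2 * (n : ℝ) - 4 * (k : ℝ)) / ((n : ℝ) - 2)) *
        sigmaMinors n k (Matrix.of fun i j => Vmat n (bubble n ε) x i j / bubble n ε x)
      = (n.choose k : ℝ) * ((n : ℝ) - 2) ^ k * bubble n ε x ^ (2 * (n : ℝ) / ((n : ℝ) - 2)) := by
  have hV : (Matrix.of fun i j => Vmat n (bubble n ε) x i j / bubble n ε x)
      = (((n : ℝ) - 2) * (ε / (ε ^ 2 + ∑ i, x i ^ 2)) ^ 2) • (1 : Matrix (Fin n) (Fin n) ℝ) := by
    rw [congrFun (bubble_eq_const_mul_rpow hε) x, bubble_eq_const_mul_rpow hε,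
      Vmat_div_const_mul_add_sum_sq_rpow hn (by positivity) (by positivity), div_pow, mul_div_assoc]
  have hsplit (w : ℝ) (hw : 0 < w) : w ^ ((n : ℝ) - 2 * k) * (w ^ 2) ^ k = w ^ (n : ℝ) := by
    rw [← pow_mul, ← Real.rpow_natCast, ← Real.rpow_add hw]
    push_cast
    ring_nf
  rw [hV, sigmaMinors_smul_one, show 2 * (n : ℝ) - 4 * k = 2 * (n - 2 * k) by ring,
    bubble_rpow hn hε, bubble_rpow hn hε, mul_pow, ← hsplit _ (by positivity)]
  ring

end Bubble

/-- The bubble integrals: `∫_{ℝⁿ} v_ε^{2n/(n-2)}` is finite and independent of `ε`, and for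
every `1 ≤ k ≤ n`,
`∫_{ℝⁿ} v_ε^{(2n-4k)/(n-2)} σ_k(λ(V[v_ε]/v_ε)) = C_{n,k} ∫_{ℝⁿ} v_ε^{2n/(n-2)}`
with `C_{n,k} = binom(n,k) (n-2)^k`. -/
theorem bubble_integrals (n : ℕ) (hn : 3 ≤ n) :
    (∀ ε : ℝ, 0 < ε →
      Integrable (fun x : Fin n → ℝ => bubble n ε x ^ ((2 * (n : ℝ)) / ((n : ℝ) - 2)))) ∧
    (∀ ε : ℝ, 0 < ε →
      ∫ x : Fin n → ℝ, bubble n ε x ^ ((2 * (n : ℝ)) / ((n : ℝ) - 2))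
        = ∫ x : Fin n → ℝ, bubble n 1 x ^ ((2 * (n : ℝ)) / ((n : ℝ) - 2))) ∧
    ∀ k : ℕ, 1 ≤ k → k ≤ n → ∀ ε : ℝ, 0 < ε →
      ∫ x : Fin n → ℝ, bubble n ε x ^ ((2 * (n : ℝ) - 4 * (k : ℝ)) / ((n : ℝ) - 2)) *
          sigmaMinors n k (Matrix.of fun i j => Vmat n (bubble n ε) x i j / bubble n ε x)
        = (n.choose k : ℝ) * ((n : ℝ) - 2) ^ k
            * ∫ x : Fin n → ℝ, bubble n ε x ^ ((2 * (n : ℝ)) / ((n : ℝ) - 2)) := by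
  have hn2 : (n : ℝ) ≠ 2 := by
    have : (3 : ℝ) ≤ n := by exact_mod_cast hn
    linarith
  refine ⟨fun ε hε => ?_, fun ε hε => ?_, fun k _ _ ε hε => ?_⟩
  · simp only [bubble_rpow_critical_eq hn2 hε]
    exact ((integrable_bubble_one_rpow_critical hn).comp_smul (inv_ne_zero hε.ne')).const_mul _
  · simp only [bubble_rpow_critical_eq hn2 hε]
    rw [integral_const_mul, Measure.integral_comp_inv_smul_of_nonneg volume
      (fun x => bubble n 1 x ^ (2 * (n : ℝ) / ((n : ℝ) - 2))) hε.le,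
      Module.finrank_fin_fun, smul_eq_mul, inv_mul_cancel_left₀ (pow_ne_zero n hε.ne')]
  · simp only [bubble_rpow_mul_sigmaMinors hn2 hε]
    exact integral_const_mul _ _
end

section
/- Counterexample to interior C² estimates (ODE reduction): let ψ(x) = x − (9/7)x^{7/3} for x ≥ 0 and f(x) = 1/3 − x^{4/3} + ψ(x)^{4/3}. Then there exists δ ∈ (0,1) such that: (a) the function φ(x) = ∫_0^x ψ(s)^{1/3} ds satisfies the equation (φ''(x) + φ'(x)²)·φ'(x)² = f(x) for all x ∈ (0, δ); (b) f(x) > 0 for x ∈ [0, δ] and the even extension x ↦ f(|x|) is twice continuously differentiable on (−δ, δ); (c) φ''(x) → +∞ as x → 0⁺, so φ'' is unbounded on (0, δ) and the even extension of φ is not C² at 0. -/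
/-!
Put `ψ = (φ')³`. Wherever `ψ > 0` the equation `(φ'' + φ'²) φ'² = f` reads `ψ'/3 + ψ^{4/3} = f`,
which holds by the choice of `f`; and `ψ > 0` just to the right of `0`. As `φ'² → 0⁺` and
`f → 1/3`, the equation forces `φ'' = f / φ'² - φ'² → +∞`, so the even extension of `φ` is not `C²`.

For `y ≥ 0` near `0`, `f y = 1/3 + G (y^{4/3})` with `G t = t ((1 - 9t/7)^{4/3} - 1)` smooth
near `0` and `G' 0 = 0`. The second derivative of `|x|^{4/3}` blows up like `|x|^{-2/3}`, but in
`(G ∘ |·|^{4/3})''` it is multiplied by `G' (|x|^{4/3}) = O(|x|^{4/3})`, so `x ↦ f |x|` is `C²`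
near `0`.
All the properties are local at `0`, so `δ` only has to be small.
-/

open Set Filter Topology Asymptotics

/-- `ψ(x) = x - (9/7) x^{7/3}`. -/
noncomputable def psiFun (x : ℝ) : ℝ := x - (9 / 7) * x ^ ((7 : ℝ) / 3)

/-- `f(x) = 1/3 - x^{4/3} + ψ(x)^{4/3}`. -/
noncomputable def fFun (x : ℝ) : ℝ := 1 / 3 - x ^ ((4 : ℝ) / 3) + (psiFun x) ^ ((4 : ℝ) / 3)

/-- `φ(x) = ∫_0^x ψ(s)^{1/3} ds`, so that `φ' = ψ^{1/3}`. -/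
noncomputable def phiFun (x : ℝ) : ℝ := ∫ s in (0 : ℝ)..x, (psiFun s) ^ ((1 : ℝ) / 3)

theorem contDiffAt_two_of_eventually_hasDerivAt {g g₁ g₂ : ℝ → ℝ} {a : ℝ}
    (h₁ : ∀ᶠ x in 𝓝 a, HasDerivAt g (g₁ x) x) (h₂ : ∀ᶠ x in 𝓝 a, HasDerivAt g₁ (g₂ x) x)
    (h₃ : ∀ᶠ x in 𝓝 a, ContinuousAt g₂ x) : ContDiffAt ℝ 2 g a := by
  obtain ⟨U, hU, hUo, haU⟩ := mem_nhds_iff.mp (h₁.and (h₂.and h₃))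
  have hg₂ : ContDiffOn ℝ 0 g₂ U :=
    contDiffOn_zero.mpr fun x hx => (hU hx).2.2.continuousWithinAt
  have hg₁ : ContDiffOn ℝ 1 g₁ U := by
    rw [show (1 : WithTop ℕ∞) = 0 + 1 from rfl, contDiffOn_succ_iff_deriv_of_isOpen hUo]
    exact ⟨fun x hx => (hU hx).2.1.differentiableAt.differentiableWithinAt, by simp,
      hg₂.congr fun x hx => (hU hx).2.1.deriv⟩
  have hg : ContDiffOn ℝ 2 g U := by
    rw [show (2 : WithTop ℕ∞) = 1 + 1 from rfl, contDiffOn_succ_iff_deriv_of_isOpen hUo]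
    exact ⟨fun x hx => (hU hx).1.differentiableAt.differentiableWithinAt, by simp,
      hg₁.congr fun x hx => (hU hx).1.deriv⟩
  exact hg.contDiffAt (hUo.mem_nhds haU)

theorem ContDiffAt.eventually_hasDerivAt_deriv {𝕜 F : Type*} [NontriviallyNormedField 𝕜]
    [NormedAddCommGroup F] [NormedSpace 𝕜 F] {f : 𝕜 → F} {a : 𝕜} (hf : ContDiffAt 𝕜 2 f a) :
    ∀ᶠ t in 𝓝 a, HasDerivAt f (deriv f t) t ∧ HasDerivAt (deriv f) (deriv (deriv f) t) t ∧
      ContinuousAt (deriv f) t ∧ ContinuousAt (deriv (deriv f)) t := by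
  filter_upwards [hf.eventually (by simp)] with t ht
  have h₁ : ContDiffAt 𝕜 1 (deriv f) t := ht.derivWithin (by norm_num)
  have h₂ : ContDiffAt 𝕜 0 (deriv (deriv f)) t := h₁.derivWithin (by norm_num)
  exact ⟨(ht.differentiableAt two_ne_zero).hasDerivAt,
    (h₁.differentiableAt one_ne_zero).hasDerivAt, h₁.continuousAt, h₂.continuousAt⟩

theorem hasDerivAt_mul_id_zero_of_tendsto {φ : ℝ → ℝ} (h : Tendsto φ (𝓝 0) (𝓝 0)) :
    HasDerivAt (fun x => φ x * x) 0 0 := by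
  rw [hasDerivAt_iff_isLittleO]
  simpa using ((isLittleO_one_iff ℝ).mpr h).mul_isBigO (isBigO_refl (fun x : ℝ => x) _)

section AbsRpow

variable {p : ℝ}

theorem tendsto_abs_rpow_nhds_zero (hp : 0 < p) :
    Tendsto (fun x : ℝ => |x| ^ p) (𝓝 0) (𝓝 0) := by
  simpa [Real.zero_rpow hp.ne'] using
    ((continuous_abs.rpow_const fun _ => Or.inr hp.le).tendsto 0)

theorem continuous_deriv_abs_rpow (hp : 1 < p) :
    Continuous fun x : ℝ => p * |x| ^ (p - 2) * x := by
  have h := (contDiff_norm_rpow (E := ℝ) hp).continuous_deriv le_rfl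
  simpa only [Real.norm_eq_abs, funext fun x => (hasDerivAt_abs_rpow x hp).deriv] using h

theorem hasDerivAt_deriv_abs_rpow {x : ℝ} (hx : x ≠ 0) :
    HasDerivAt (fun y => p * |y| ^ (p - 2) * y) (p * (p - 1) * |x| ^ (p - 2)) x := by
  have hax : 0 < |x| := abs_pos.mpr hx
  have h : HasDerivAt (fun y => p * |y| ^ (p - 2) * y) _ x :=
    (((hasDerivAt_abs hx).rpow_const (p := p - 2) (Or.inl hax.ne')).const_mul p).fun_mul
      (hasDerivAt_id' x)
  refine h.congr_deriv ?_
  rw [Real.rpow_sub_one hax.ne',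
    show p * ((SignType.sign x : ℝ) * (p - 2) * (|x| ^ (p - 2) / |x|)) * x
      = p * (p - 2) * |x| ^ (p - 2) * (SignType.sign x * x / |x|) by ring,
    sign_mul_self, div_self hax.ne']
  ring

theorem tendsto_comp_abs_rpow_mul_abs_rpow {F : ℝ → ℝ} (hp : 1 < p)
    (hF : DifferentiableAt ℝ F 0) (hF0 : F 0 = 0) :
    Tendsto (fun x => F (|x| ^ p) * |x| ^ (p - 2)) (𝓝 0) (𝓝 0) := by
  have hFO : (fun x => F (|x| ^ p)) =O[𝓝 0] fun x => |x| ^ p := by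
    simpa [hF0, Function.comp_def] using
      hF.isBigO_sub.comp_tendsto (tendsto_abs_rpow_nhds_zero (by linarith))
  have hlim : Tendsto (fun x : ℝ => |x| ^ p * |x| ^ (p - 2)) (𝓝 0) (𝓝 0) := by
    have h := tendsto_abs_rpow_nhds_zero (p := p + (p - 2)) (by linarith)
    simpa only [Real.rpow_add' (abs_nonneg _) (by linarith : p + (p - 2) ≠ 0)] using h
  exact (hFO.mul (isBigO_refl _ _)).trans_tendsto hlim

theorem contDiffAt_comp_abs_rpow {G : ℝ → ℝ} (hp : 1 < p) (hG : ContDiffAt ℝ 2 G 0)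
    (hG' : deriv G 0 = 0) : ContDiffAt ℝ 2 (fun x => G (|x| ^ p)) 0 := by
  have hG_near :=
    (tendsto_abs_rpow_nhds_zero (p := p) (by linarith)).eventually hG.eventually_hasDerivAt_deriv
  set G₁ := deriv G
  set G₂ := deriv G₁
  have hu : Continuous fun x : ℝ => |x| ^ p :=
    continuous_abs.rpow_const fun _ => Or.inr (by linarith : (0 : ℝ) ≤ p)
  have hu₁ := continuous_deriv_abs_rpow hp
  have h0 : (0 : ℝ) ^ p = 0 := Real.zero_rpow (by linarith)
  have hkey : Tendsto (fun x => G₁ (|x| ^ p) * |x| ^ (p - 2)) (𝓝 0) (𝓝 0) := by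
    have h := hG_near.self_of_nhds.2.1.differentiableAt
    rw [abs_zero, h0] at h
    exact tendsto_comp_abs_rpow_mul_abs_rpow hp h hG'
  refine contDiffAt_two_of_eventually_hasDerivAt
    (g₁ := fun x => G₁ (|x| ^ p) * (p * |x| ^ (p - 2) * x))
    (g₂ := fun x => G₂ (|x| ^ p) * (p * |x| ^ (p - 2) * x) ^ 2 +
      p * (p - 1) * (G₁ (|x| ^ p) * |x| ^ (p - 2))) ?_ ?_ ?_
  · filter_upwards [hG_near] with x hx
    exact hx.1.comp x (hasDerivAt_abs_rpow x hp)
  · filter_upwards [hG_near] with x hx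
    rcases eq_or_ne x 0 with rfl | hx0
    · have h := hasDerivAt_mul_id_zero_of_tendsto (by simpa using hkey.const_mul p)
      refine (h.congr_deriv (by simp [h0, hG'])).congr_of_eventuallyEq
        (Eventually.of_forall fun x => ?_)
      ring
    · refine ((hx.2.1.comp x (hasDerivAt_abs_rpow x hp)).fun_mul
        (hasDerivAt_deriv_abs_rpow hx0)).congr_deriv ?_
      simp only [Function.comp_apply]
      ring
  · filter_upwards [hG_near] with x hx
    have hG₂u := hx.2.2.2.comp (f := fun x : ℝ => |x| ^ p) hu.continuousAt
    rcases eq_or_ne x 0 with rfl | hx0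
    · have := (hG₂u.fun_mul (hu₁.continuousAt.fun_pow 2)).tendsto.add
        (hkey.const_mul (p * (p - 1)))
      rw [ContinuousAt]
      convert this using 2 <;> simp [h0, hG']
    · have hv : ContinuousAt (fun x : ℝ => |x| ^ (p - 2)) x :=
        continuous_abs.continuousAt.rpow_const (Or.inl (abs_ne_zero.mpr hx0))
      exact (hG₂u.fun_mul (hu₁.continuousAt.fun_pow 2)).add (continuousAt_const.mul
        ((hx.2.2.1.comp (f := fun x : ℝ => |x| ^ p) hu.continuousAt).fun_mul hv))

end AbsRpow

theorem not_contDiffAt_two_comp_abs {g : ℝ → ℝ}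
    (hg : Tendsto (deriv (deriv g)) (𝓝[>] 0) atTop) : ¬ ContDiffAt ℝ 2 (fun x => g |x|) 0 := by
  intro h
  have hcont : ContinuousAt (deriv (deriv fun x => g |x|)) 0 :=
    ((h.derivWithin (m := 1) (by norm_num)).derivWithin (m := 0) (by norm_num)).continuousAt
  have heq : deriv (deriv fun x => g |x|) =ᶠ[𝓝[>] 0] deriv (deriv g) := by
    filter_upwards [self_mem_nhdsWithin] with y (hy : 0 < y)
    have : (fun x => g |x|) =ᶠ[𝓝 y] g := by
      filter_upwards [lt_mem_nhds hy] with z hz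
      rw [abs_of_pos hz]
    exact this.deriv.deriv_eq
  exact not_tendsto_nhds_of_tendsto_atTop hg _
    ((hcont.tendsto.mono_left nhdsWithin_le_nhds).congr' heq)

theorem not_exists_abs_le_of_tendsto_nhdsGT_atTop {h : ℝ → ℝ} {a δ : ℝ} (hδ : a < δ)
    (hh : Tendsto h (𝓝[>] a) atTop) : ¬ ∃ C, ∀ x ∈ Ioo a δ, |h x| ≤ C := by
  rintro ⟨C, hC⟩
  obtain ⟨x, hx, hCx⟩ :=
    ((eventually_mem_set.mpr (Ioo_mem_nhdsGT hδ)).and (hh.eventually_gt_atTop C)).exists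
  exact (hCx.trans_le (le_abs_self _)).not_ge (hC x hx)

theorem exists_forall_Icc_of_eventually_nhds_zero {P : ℝ → Prop} (h : ∀ᶠ x in 𝓝 0, P x) :
    ∃ δ, 0 < δ ∧ δ < 1 ∧ ∀ x ∈ Icc (-δ) δ, P x := by
  obtain ⟨ε, hε, hP⟩ := Metric.eventually_nhds_iff.mp h
  refine ⟨min (ε / 2) (1 / 2), by positivity, by linarith [min_le_right (ε / 2) (1 / 2)],
    fun x hx => hP ?_⟩
  rw [Real.dist_0_eq_abs]
  exact (abs_le.mpr hx).trans_lt (by linarith [min_le_left (ε / 2) (1 / 2)])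

theorem deriv_rpow_one_div_three_add_sq_mul_sq {ψ : ℝ → ℝ} {ψ' x : ℝ} (hψ : HasDerivAt ψ ψ' x)
    (hpos : 0 < ψ x) :
    (deriv (fun y => ψ y ^ ((1 : ℝ) / 3)) x + (ψ x ^ ((1 : ℝ) / 3)) ^ 2) *
      (ψ x ^ ((1 : ℝ) / 3)) ^ 2 = ψ' / 3 + ψ x ^ ((4 : ℝ) / 3) := by
  rw [(hψ.rpow_const (Or.inl hpos.ne')).deriv]
  have hsq : (ψ x ^ ((1 : ℝ) / 3)) ^ 2 = ψ x ^ ((2 : ℝ) / 3) := by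
    rw [← Real.rpow_natCast, ← Real.rpow_mul hpos.le]; norm_num
  have hinv : ψ x ^ ((1 : ℝ) / 3 - 1) * ψ x ^ ((2 : ℝ) / 3) = 1 := by
    rw [← Real.rpow_add hpos]; norm_num
  have hmul : ψ x ^ ((2 : ℝ) / 3) * ψ x ^ ((2 : ℝ) / 3) = ψ x ^ ((4 : ℝ) / 3) := by
    rw [← Real.rpow_add hpos]; norm_num
  rw [hsq]
  linear_combination ψ' / 3 * hinv + hmul

theorem psiFun_zero : psiFun 0 = 0 := by simp [psiFun]

theorem psiFun_eq_mul {x : ℝ} (hx : 0 ≤ x) :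
    psiFun x = x * (1 - 9 / 7 * x ^ ((4 : ℝ) / 3)) := by
  rw [psiFun, show (7 : ℝ) / 3 = 1 + 4 / 3 by norm_num, Real.rpow_one_add' hx (by norm_num)]
  ring

theorem continuous_psiFun : Continuous psiFun :=
  continuous_id.sub (continuous_const.mul (Real.continuous_rpow_const (by norm_num)))

theorem hasDerivAt_psiFun (x : ℝ) : HasDerivAt psiFun (1 - 3 * x ^ ((4 : ℝ) / 3)) x := by
  have h := ((hasDerivAt_id x).sub
    ((Real.hasDerivAt_rpow_const (p := (7 : ℝ) / 3) (Or.inr (by norm_num))).const_mul (9 / 7)))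
  refine h.congr_deriv ?_
  norm_num
  ring

theorem eventually_psiFun_pos : ∀ᶠ x in 𝓝[>] 0, 0 < psiFun x := by
  have hc : Continuous fun x : ℝ => 1 - 9 / 7 * x ^ ((4 : ℝ) / 3) :=
    continuous_const.sub (continuous_const.mul (Real.continuous_rpow_const (by norm_num)))
  have h : Tendsto (fun x : ℝ => 1 - 9 / 7 * x ^ ((4 : ℝ) / 3)) (𝓝 0) (𝓝 1) := by
    simpa using hc.tendsto 0
  filter_upwards [self_mem_nhdsWithin,
    (h.eventually (eventually_gt_nhds one_pos)).filter_mono nhdsWithin_le_nhds]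
    with x (hx : 0 < x) hx'
  rw [psiFun_eq_mul hx.le]
  exact mul_pos hx hx'

theorem deriv_phiFun : deriv phiFun = fun x => psiFun x ^ ((1 : ℝ) / 3) :=
  funext fun x =>
    (continuous_psiFun.rpow_const fun _ => Or.inr (by norm_num : (0 : ℝ) ≤ 1 / 3)).deriv_integral
      _ 0 x

theorem deriv_deriv_phiFun_add_sq_mul_sq {x : ℝ} (hx : 0 < psiFun x) :
    (deriv (deriv phiFun) x + deriv phiFun x ^ 2) * deriv phiFun x ^ 2 = fFun x := by
  simp only [deriv_phiFun]
  rw [deriv_rpow_one_div_three_add_sq_mul_sq (hasDerivAt_psiFun x) hx, fFun]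
  ring

theorem continuous_fFun : Continuous fFun :=
  (continuous_const.sub (Real.continuous_rpow_const (by norm_num))).add
    (continuous_psiFun.rpow_const fun _ => Or.inr (by norm_num))

theorem fFun_zero : fFun 0 = 1 / 3 := by simp [fFun, psiFun_zero]

theorem eventually_fFun_pos : ∀ᶠ x in 𝓝 0, 0 < fFun x :=
  (continuous_fFun.tendsto 0).eventually (eventually_gt_nhds (by rw [fFun_zero]; norm_num))

theorem fFun_eq_of_nonneg {y : ℝ} (hy : 0 ≤ y) (hy' : 9 / 7 * y ^ ((4 : ℝ) / 3) ≤ 1) :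
    fFun y = 1 / 3 + y ^ ((4 : ℝ) / 3) * ((1 - 9 / 7 * y ^ ((4 : ℝ) / 3)) ^ ((4 : ℝ) / 3) - 1) := by
  rw [fFun, psiFun_eq_mul hy, Real.mul_rpow hy (by linarith)]
  ring

theorem contDiffAt_fFun_abs : ContDiffAt ℝ 2 (fun x => fFun |x|) 0 := by
  set h : ℝ → ℝ := fun t => (1 - 9 / 7 * t) ^ ((4 : ℝ) / 3) - 1
  have hh : ContDiffAt ℝ 2 h 0 :=
    ((contDiffAt_const.sub (contDiffAt_const.mul contDiffAt_id)).rpow_const_of_ne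
      (by norm_num)).sub contDiffAt_const
  have hG : ContDiffAt ℝ 2 (fun t => t * h t) 0 := contDiffAt_id.mul hh
  have hG' : deriv (fun t => t * h t) 0 = 0 := by
    rw [((hasDerivAt_id' 0).fun_mul (hh.differentiableAt two_ne_zero).hasDerivAt).deriv]
    simp [h]
  have heq : (fun x => fFun |x|) =ᶠ[𝓝 0]
      fun x => 1 / 3 + |x| ^ ((4 : ℝ) / 3) * h (|x| ^ ((4 : ℝ) / 3)) := by
    filter_upwards [(tendsto_abs_rpow_nhds_zero (p := 4 / 3) (by norm_num)).eventually
      (eventually_le_nhds (by norm_num : (0 : ℝ) < 7 / 9))] with x hx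
    exact fFun_eq_of_nonneg (abs_nonneg x) (by linarith)
  exact (contDiffAt_const.add (contDiffAt_comp_abs_rpow (by norm_num) hG hG')).congr_of_eventuallyEq
    heq

theorem tendsto_deriv_deriv_phiFun : Tendsto (deriv (deriv phiFun)) (𝓝[>] 0) atTop := by
  have hsq : Tendsto (fun x => deriv phiFun x ^ 2) (𝓝[>] 0) (𝓝[>] 0) := by
    refine tendsto_nhdsWithin_iff.mpr ⟨?_, ?_⟩
    · have hc : Continuous fun x => (psiFun x ^ ((1 : ℝ) / 3)) ^ 2 :=
        (continuous_psiFun.rpow_const fun _ => Or.inr (by norm_num)).fun_pow 2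
      simpa [deriv_phiFun, psiFun_zero] using (hc.tendsto 0).mono_left nhdsWithin_le_nhds
    · filter_upwards [eventually_psiFun_pos] with x hx
      simp only [deriv_phiFun, mem_Ioi]
      positivity
  have hf : Tendsto fFun (𝓝[>] 0) (𝓝 (1 / 3)) :=
    fFun_zero ▸ (continuous_fFun.tendsto 0).mono_left nhdsWithin_le_nhds
  have := (hsq.inv_tendsto_nhdsGT_zero.atTop_mul_pos (by norm_num) hf).atTop_add
    (hsq.mono_right nhdsWithin_le_nhds).neg
  refine this.congr' ?_
  filter_upwards [eventually_psiFun_pos] with x hx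
  have hode := deriv_deriv_phiFun_add_sq_mul_sq hx
  have hne : deriv phiFun x ≠ 0 := by simp only [deriv_phiFun]; positivity
  simp only [Pi.inv_apply]
  rw [← hode]
  field_simp
  ring

/-- The ODE reduction of the counterexample to interior `C²` estimates: there is
`δ ∈ (0,1)` such that (a) `(φ'' + φ'²) φ'² = f` on `(0,δ)`; (b) `f > 0` on `[0,δ]`
and the even extension `x ↦ f(|x|)` is `C²` on `(-δ,δ)`; (c) `φ''(x) → +∞` as
`x → 0⁺`, so `φ''` is unbounded on `(0,δ)` and the even extension of `φ` is not
`C²` at the origin. -/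
theorem counterexample_ode_reduction :
    ∃ δ : ℝ, 0 < δ ∧ δ < 1 ∧
      (∀ x ∈ Ioo (0 : ℝ) δ,
        (deriv (deriv phiFun) x + (deriv phiFun x) ^ 2) * (deriv phiFun x) ^ 2 = fFun x) ∧
      (∀ x ∈ Icc (0 : ℝ) δ, 0 < fFun x) ∧
      ContDiffOn ℝ 2 (fun x => fFun |x|) (Ioo (-δ) δ) ∧
      Tendsto (deriv (deriv phiFun)) (nhdsWithin 0 (Ioi (0 : ℝ))) atTop ∧
      (¬ ∃ C : ℝ, ∀ x ∈ Ioo (0 : ℝ) δ, |deriv (deriv phiFun) x| ≤ C) ∧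
      ¬ ContDiffAt ℝ 2 (fun x => phiFun |x|) 0 := by
  obtain ⟨δ, hδ, hδ1, hP⟩ := exists_forall_Icc_of_eventually_nhds_zero
    ((eventually_nhdsWithin_iff.mp eventually_psiFun_pos).and
      (eventually_fFun_pos.and (contDiffAt_fFun_abs.eventually (by simp))))
  refine ⟨δ, hδ, hδ1, fun x hx => ?_, fun x hx => ?_, fun x hx => ?_,
    tendsto_deriv_deriv_phiFun,
    not_exists_abs_le_of_tendsto_nhdsGT_atTop hδ tendsto_deriv_deriv_phiFun,
    not_contDiffAt_two_comp_abs tendsto_deriv_deriv_phiFun⟩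
  · exact deriv_deriv_phiFun_add_sq_mul_sq ((hP x ⟨by linarith [hx.1], hx.2.le⟩).1 hx.1)
  · exact (hP x ⟨by linarith [hx.1], hx.2⟩).2.1
  · exact (hP x (Ioo_subset_Icc_self hx)).2.2.contDiffWithinAt
end
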